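/- Let p be a prime and T the p-ary rooted tree. For a ∈ Aut(T), the following are equivalent: (1) a is minimal; (2) a acts transitively on V_n for every n; (3) the order of a restricted to V_n equals p^n for every n; (4) the closure of ⟨a⟩ is isometrically isomorphic to the p-adic integers Z_p; (5) the dynamical system (∂T, a) is conjugate by an isometry to the p-adic odometer (Z_p, x ↦ x+1). -/

import Mathlib

/-- The boundary of the spherically homogeneous rooted tree with spherical
index `m`: infinite paths are sequences `x` with `x n ∈ {0, …, m n - 1}`. -/
abbrev Bd (m : ℕ → ℕ) : Type := ∀ n : ℕ, Fin (m n)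

/-- A permutation of the boundary is a tree automorphism iff it preserves the
relation "agree on the first `N` coordinates" (i.e. it permutes each vertex
level preserving the tree structure). -/
def IsTreeAut {m : ℕ → ℕ} (e : Equiv.Perm (Bd m)) : Prop :=
  ∀ (N : ℕ) (x y : Bd m), (∀ n < N, x n = y n) ↔ (∀ n < N, e x n = e y n)

/-- The automorphism group of the spherically homogeneous rooted tree with
spherical index `m`, realized as a subgroup of the permutations of the
boundary. -/
def treeAutGroup (m : ℕ → ℕ) : Subgroup (Equiv.Perm (Bd m)) where
  carrier := {e | IsTreeAut e}
  one_mem' := fun _ _ _ => Iff.rfl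
  mul_mem' := by
    intro a b ha hb N x y
    exact (hb N x y).trans (ha N (b x) (b y))
  inv_mem' := by
    intro a ha N x y
    have h := ha N (a⁻¹ x) (a⁻¹ y)
    simpa [Equiv.Perm.coe_inv, Equiv.apply_symm_apply] using h.symm

/-- The orbit of `x` under the cyclic group generated by `a`. -/
def orbitZ {m : ℕ → ℕ} (a : Equiv.Perm (Bd m)) (x : Bd m) : Set (Bd m) :=
  {y | ∃ k : ℤ, (a ^ k) x = y}

/-- `a` acts transitively on every vertex level `V n` (vertices at level `n`
are identified with length-`n` prefixes of boundary points). -/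
def LevelTransitive {m : ℕ → ℕ} (a : Equiv.Perm (Bd m)) : Prop :=
  ∀ (n : ℕ) (x y : Bd m), ∃ k : ℤ, ∀ i < n, ((a ^ k) x) i = y i

/-- `f` belongs to the closure of the set `Γ` of tree automorphisms in the
profinite (= uniform) topology on `Aut(T)`: for every level `n` there is an
element of `Γ` agreeing with `f` up to level `n` everywhere. -/
def InClosure {m : ℕ → ℕ} (Γ : Set (Equiv.Perm (Bd m))) (f : Bd m → Bd m) : Prop :=
  ∀ n : ℕ, ∃ g ∈ Γ, ∀ x : Bd m, ∀ i < n, f x i = g x i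

-- The ultrametric `d(x, y) = 2 ^ (-(k-1))` where `k` is the first (1-indexed)
-- coordinate at which the sequences `x` and `y` differ.
open Classical in
noncomputable def ultraDist {α : ℕ → Type*} (x y : ∀ n, α n) : ℝ :=
  if h : x = y then 0 else (2 : ℝ)⁻¹ ^ Nat.find (Function.ne_iff.mp h)

/-- The uniform distance `D(f, g) = sup_x d (f x) (g x)`. -/
noncomputable def ultraDistMap {m : ℕ → ℕ} (f g : Bd m → Bd m) : ℝ :=
  ⨆ x : Bd m, ultraDist (f x) (g x)

/-- The `p`-adic integers, realized as the inverse limit of the rings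
`ℤ/p^(n+1)ℤ`, with the metric `ultraDist` of the paper. -/
def Zadic (p : ℕ) : Type :=
  {x : ∀ n : ℕ, ZMod (p ^ (n + 1)) //
    ∀ n, ZMod.castHom (pow_dvd_pow p (Nat.le_succ (n + 1))) (ZMod (p ^ (n + 1))) (x (n + 1)) = x n}

/-!
A tree automorphism `a` permutes each level `V n`, a set of `p ^ n` vertices, and the orbit of a
vertex under `⟨a⟩` has as many elements as its minimal period. So `a` is transitive on `V n` iff
some (equivalently every) vertex of level `n` has period `p ^ n`; since the periods divide `p ^ n`
when `a ^ p ^ n` fixes the level, this happens iff `a ^ p ^ (n - 1)` moves some vertex of level `n`.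
Minimality is transitivity on the cylinders.

Under level transitivity, fix `o ∈ ∂T`: the exponents `k` for which `a ^ k o` agrees with `x` up to
level `n` form one residue class modulo `p ^ n`, and these classes make up a `p`-adic integer `w x`.
The map `w` is an isometry conjugating `a` to `+1`, and every `f` in the closure of `⟨a⟩` acts in
these coordinates as translation by `w (f o)`, which identifies the closure with `ℤ_p`. Conversely,
an isometric conjugacy to the odometer, or an isometric isomorphism of the closure with `ℤ_p`,
carries the periods of `+1` on `ℤ / p ^ n` back to `a`.
-/

open Function MulAction

lemma MulAction.minimalPeriod_eq_card_iff_orbit_zpowers_eq_univ {G β : Type*} [Group G]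
    [MulAction G β] [Finite β] {g : G} {b : β} :
    minimalPeriod (g • ·) b = Nat.card β ↔ orbit (Subgroup.zpowers g) b = Set.univ := by
  rw [Set.eq_univ_iff_ncard, ← Nat.card_coe_set_eq, Nat.card_congr (orbitZPowersEquiv g b),
    Nat.card_zmod]

section Agreement

variable {α β : ℕ → Type*}

lemma forall_agree_iff_eq {x y : ∀ n, α n} : (∀ n, ∀ i < n, x i = y i) ↔ x = y :=
  ⟨fun h => funext fun i => h (i + 1) i i.lt_succ_self, by rintro rfl; simp⟩

lemma forall_agree_succ_iff {x y : ∀ n, α n} {n : ℕ} :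
    (∀ j < n, ∀ i < j + 1, x i = y i) ↔ ∀ i < n, x i = y i :=
  ⟨fun h i hi => h i hi i i.lt_succ_self, fun h _ hj i hi => h i (by omega)⟩

lemma ultraDist_le_iff {x y : ∀ n, α n} {n : ℕ} :
    ultraDist x y ≤ (2 : ℝ)⁻¹ ^ n ↔ ∀ i < n, x i = y i := by
  classical
  unfold ultraDist
  split_ifs with h
  · subst h
    simp
  · rw [pow_le_pow_iff_right_of_lt_one₀ (by norm_num) (by norm_num), Nat.le_find_iff]
    simp only [not_not]

lemma ultraDist_eq_ultraDist_iff {x y : ∀ n, α n} {s t : ∀ n, β n} :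
    ultraDist x y = ultraDist s t ↔ ∀ n, (∀ i < n, x i = y i) ↔ (∀ i < n, s i = t i) := by
  classical
  refine ⟨fun h n => by rw [← ultraDist_le_iff, ← ultraDist_le_iff, h], fun h => ?_⟩
  have hxy : x = y ↔ s = t := by
    rw [← forall_agree_iff_eq, ← forall_agree_iff_eq, forall_congr' h]
  unfold ultraDist
  by_cases hx : x = y
  · rw [dif_pos hx, dif_pos (hxy.1 hx)]
  · rw [dif_neg hx, dif_neg (mt hxy.2 hx)]
    congr 1
    refine eq_of_forall_le_iff fun n => ?_
    simpa only [Nat.le_find_iff, not_not] using h n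

lemma ultraDistMap_le_iff {m : ℕ → ℕ} [Nonempty (Bd m)] {f g : Bd m → Bd m} {n : ℕ} :
    ultraDistMap f g ≤ (2 : ℝ)⁻¹ ^ n ↔ ∀ x, ∀ i < n, f x i = g x i := by
  have hbdd : BddAbove (Set.range fun x => ultraDist (f x) (g x)) := by
    refine ⟨(2 : ℝ)⁻¹ ^ 0, ?_⟩
    rintro _ ⟨x, rfl⟩
    exact ultraDist_le_iff.2 fun i hi => absurd hi i.not_lt_zero
  simp only [ultraDistMap, ciSup_le_iff hbdd, ultraDist_le_iff]

end Agreement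

section Vertices

variable {m : ℕ → ℕ}

def levelSetoid (m : ℕ → ℕ) (n : ℕ) : Setoid (Bd m) where
  r x y := ∀ i < n, x i = y i
  iseqv := ⟨fun _ _ _ => rfl, fun h i hi => (h i hi).symm,
    fun h h' i hi => (h i hi).trans (h' i hi)⟩

/-- The level `V n` of the tree. -/
abbrev Vertex (m : ℕ → ℕ) (n : ℕ) : Type := Quotient (levelSetoid m n)

abbrev Vertex.mk (n : ℕ) (x : Bd m) : Vertex m n := Quotient.mk _ x

lemma Vertex.mk_eq_mk_iff {n : ℕ} {x y : Bd m} :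
    Vertex.mk n x = Vertex.mk n y ↔ ∀ i < n, x i = y i :=
  Quotient.eq

def Vertex.trunc {n : ℕ} : Vertex m n → ∀ i : Fin n, Fin (m i) :=
  Quotient.lift (fun x i => x i) fun _ _ h => funext fun i => h i i.2

lemma Vertex.trunc_injective {n : ℕ} : Injective (Vertex.trunc (m := m) (n := n)) := by
  rintro ⟨x⟩ ⟨y⟩ h
  exact Quotient.sound fun i hi => congrFun h ⟨i, hi⟩

lemma Vertex.trunc_surjective [∀ i, NeZero (m i)] {n : ℕ} :
    Surjective (Vertex.trunc (m := m) (n := n)) :=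
  fun v =>
    ⟨Vertex.mk n fun i => if h : i < n then v ⟨i, h⟩ else 0, funext fun i => dif_pos i.2⟩

instance {n : ℕ} : Finite (Vertex m n) := Finite.of_injective _ Vertex.trunc_injective

lemma Vertex.card [∀ i, NeZero (m i)] {n : ℕ} : Nat.card (Vertex m n) = ∏ i : Fin n, m i := by
  rw [Nat.card_congr (Equiv.ofBijective _ ⟨Vertex.trunc_injective, Vertex.trunc_surjective⟩),
    Nat.card_pi]
  simp

instance {n : ℕ} : MulAction (treeAutGroup m) (Vertex m n) where
  smul g := Quotient.map g fun x y => (g.2 n x y).1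
  one_smul := Quotient.ind fun _ => rfl
  mul_smul _ _ := Quotient.ind fun _ => rfl

lemma dense_orbitZ_iff {a : Equiv.Perm (Bd m)} {x : Bd m} :
    Dense (orbitZ a x) ↔ ∀ (n : ℕ) (y : Bd m), ∃ k : ℤ, ∀ i < n, (a ^ k) x i = y i := by
  rw [(PiNat.isTopologicalBasis_cylinders _).dense_iff]
  constructor
  · intro h n y
    obtain ⟨_, hz, k, rfl⟩ := h _ ⟨y, n, rfl⟩ ⟨y, PiNat.self_mem_cylinder y n⟩
    exact ⟨k, PiNat.mem_cylinder_iff.1 hz⟩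
  · rintro h _ ⟨y, n, rfl⟩ -
    obtain ⟨k, hk⟩ := h n y
    exact ⟨_, PiNat.mem_cylinder_iff.2 hk, k, rfl⟩

variable {a : Equiv.Perm (Bd m)}

lemma zpow_apply_agree_iff (ha : a ∈ treeAutGroup m) (k : ℤ) {n : ℕ} {x y : Bd m} :
    (∀ i < n, (a ^ k) x i = (a ^ k) y i) ↔ ∀ i < n, x i = y i :=
  ((treeAutGroup m).zpow_mem ha k n x y).symm

lemma pow_smul_vertexMk (ha : a ∈ treeAutGroup m) (k : ℕ) (n : ℕ) (x : Bd m) :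
    (⟨a, ha⟩ : treeAutGroup m) ^ k • Vertex.mk n x = Vertex.mk n ((a ^ k) x) :=
  rfl

lemma zpow_smul_vertexMk (ha : a ∈ treeAutGroup m) (k : ℤ) (n : ℕ) (x : Bd m) :
    (⟨a, ha⟩ : treeAutGroup m) ^ k • Vertex.mk n x = Vertex.mk n ((a ^ k) x) :=
  rfl

lemma orbit_zpowers_vertexMk_eq_univ_iff (ha : a ∈ treeAutGroup m) {n : ℕ} {x : Bd m} :
    orbit (Subgroup.zpowers (⟨a, ha⟩ : treeAutGroup m)) (Vertex.mk n x) = Set.univ ↔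
      ∀ y : Bd m, ∃ k : ℤ, ∀ i < n, (a ^ k) x i = y i := by
  rw [Set.eq_univ_iff_forall, Quotient.forall]
  refine forall_congr' fun y => ?_
  constructor
  · rintro ⟨⟨_, k, rfl⟩, h⟩
    exact ⟨k, Vertex.mk_eq_mk_iff.1 h⟩
  · rintro ⟨k, hk⟩
    exact ⟨⟨_, k, rfl⟩, Vertex.mk_eq_mk_iff.2 hk⟩

end Vertices

section PAry

variable {p : ℕ} {a : Equiv.Perm (Bd (fun _ => p))}

lemma Vertex.card_const [NeZero p] {n : ℕ} : Nat.card (Vertex (fun _ => p) n) = p ^ n := by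
  simp [Vertex.card]

lemma minimalPeriod_vertexMk_eq_pow_iff [NeZero p] (ha : a ∈ treeAutGroup (fun _ => p))
    {n : ℕ} {x : Bd (fun _ => p)} :
    minimalPeriod ((⟨a, ha⟩ : treeAutGroup _) • ·) (Vertex.mk n x) = p ^ n ↔
      ∀ y : Bd (fun _ => p), ∃ k : ℤ, ∀ i < n, (a ^ k) x i = y i := by
  rw [← Vertex.card_const, minimalPeriod_eq_card_iff_orbit_zpowers_eq_univ,
    orbit_zpowers_vertexMk_eq_univ_iff]

lemma LevelTransitive.zpow_agree_self_iff [NeZero p] (h : LevelTransitive a)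
    (ha : a ∈ treeAutGroup (fun _ => p)) {n : ℕ} {x : Bd (fun _ => p)} {t : ℤ} :
    (∀ i < n, (a ^ t) x i = x i) ↔ (p : ℤ) ^ n ∣ t := by
  rw [← Vertex.mk_eq_mk_iff, ← zpow_smul_vertexMk ha, zpow_smul_eq_iff_minimalPeriod_dvd,
    (minimalPeriod_vertexMk_eq_pow_iff ha).2 (h n x)]
  simp

lemma LevelTransitive.zpow_agree_iff [NeZero p] (h : LevelTransitive a)
    (ha : a ∈ treeAutGroup (fun _ => p)) {n : ℕ} {x : Bd (fun _ => p)} {s t : ℤ} :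
    (∀ i < n, (a ^ s) x i = (a ^ t) x i) ↔ (s : ZMod (p ^ n)) = t := by
  rw [show (a ^ s) x = (a ^ (s - t)) ((a ^ t) x) by simp [← Equiv.Perm.mul_apply, ← zpow_add],
    h.zpow_agree_self_iff ha, eq_comm, ZMod.intCast_eq_intCast_iff_dvd_sub]
  simp

def LevelOrderEqPow (p : ℕ) (a : Equiv.Perm (Bd (fun _ => p))) : Prop :=
  ∀ (n : ℕ) (t : ℤ), (∀ x, ∀ i < n, (a ^ t) x i = x i) ↔ (p : ℤ) ^ n ∣ t

lemma LevelTransitive.levelOrderEqPow [NeZero p] (h : LevelTransitive a)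
    (ha : a ∈ treeAutGroup (fun _ => p)) : LevelOrderEqPow p a :=
  fun _ _ => ⟨fun hx => (h.zpow_agree_self_iff ha).1 (hx fun _ => 0),
    fun hdvd _ => (h.zpow_agree_self_iff ha).2 hdvd⟩

lemma LevelOrderEqPow.restrict_orderOf (h : LevelOrderEqPow p a) (n : ℕ) :
    (∀ x : Bd (fun _ => p), ∀ i < n, ((a ^ (p ^ n)) x) i = x i) ∧
      ∀ t, 0 < t → t < p ^ n → ∃ x : Bd (fun _ => p), ∃ i < n, ((a ^ t) x) i ≠ x i := by
  refine ⟨by exact_mod_cast (h n (p ^ n : ℕ)).2 (by simp), fun t ht htn => ?_⟩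
  by_contra! hfix
  have hdvd : p ^ n ∣ t := by exact_mod_cast (h n t).1 (by exact_mod_cast hfix)
  exact (Nat.le_of_dvd ht hdvd).not_gt htn

lemma levelTransitive_of_restrict_orderOf (hp : p.Prime) (ha : a ∈ treeAutGroup (fun _ => p))
    (h : ∀ n : ℕ, (∀ x : Bd (fun _ => p), ∀ i < n, ((a ^ (p ^ n)) x) i = x i) ∧
      ∀ t, 0 < t → t < p ^ n → ∃ x : Bd (fun _ => p), ∃ i < n, ((a ^ t) x) i ≠ x i) :
    LevelTransitive a := by
  have : NeZero p := ⟨hp.ne_zero⟩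
  rintro (_ | n) x
  · exact fun _ => ⟨0, fun i hi => absurd hi i.not_lt_zero⟩
  obtain ⟨hfix, hmove⟩ := h (n + 1)
  obtain ⟨x₁, hx₁⟩ := hmove (p ^ n) (pow_pos hp.pos n) (Nat.pow_lt_pow_succ hp.one_lt)
  have horbit : orbit (Subgroup.zpowers (⟨a, ha⟩ : treeAutGroup _)) (Vertex.mk (n + 1) x₁) =
      Set.univ := by
    rw [← minimalPeriod_eq_card_iff_orbit_zpowers_eq_univ, Vertex.card_const]
    refine Nat.eq_prime_pow_of_dvd_least_prime_pow hp ?_ ?_ <;>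
      rw [← pow_smul_eq_iff_minimalPeriod_dvd, pow_smul_vertexMk ha, Vertex.mk_eq_mk_iff]
    · simpa using hx₁
    · exact hfix x₁
  rw [← orbit_zpowers_vertexMk_eq_univ_iff ha, orbit_eq_iff.2 (horbit ▸ Set.mem_univ _), horbit]

end PAry

section Zadic

variable {p : ℕ}

lemma Zadic.natCast_val_of_le [NeZero p] (z : Zadic p) {i n : ℕ} (h : i ≤ n) :
    ((z.val n).val : ZMod (p ^ (i + 1))) = z.val i := by
  induction n, h using Nat.le_induction with
  | base => exact ZMod.natCast_zmod_val _
  | succ n hin ih =>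
    rw [← ih, ← z.prop n, ZMod.castHom_apply, ZMod.cast_eq_val, ZMod.val_natCast,
      ZMod.natCast_eq_natCast_iff', Nat.mod_mod_of_dvd _ (pow_dvd_pow p (by omega))]

lemma forall_intCast_zmod_pow_eq_zero_iff {n : ℕ} {t : ℤ} :
    (∀ i < n, (t : ZMod (p ^ (i + 1))) = 0) ↔ (p : ℤ) ^ n ∣ t := by
  simp only [ZMod.intCast_zmod_eq_zero_iff_dvd, Nat.cast_pow]
  refine ⟨fun h => ?_, fun h i hi => (pow_dvd_pow _ hi).trans h⟩
  cases n with
  | zero => simp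
  | succ n => exact h n n.lt_succ_self

end Zadic

section Odometer

variable {p : ℕ} {a : Equiv.Perm (Bd (fun _ => p))} {o : Bd (fun _ => p)}
  {w : Bd (fun _ => p) → Zadic p}

def IsOdometerChart (a : Equiv.Perm (Bd (fun _ => p))) (o : Bd (fun _ => p))
    (w : Bd (fun _ => p) → Zadic p) : Prop :=
  ∀ x n (k : ℤ), (w x).val n = k ↔ ∀ i < n + 1, (a ^ k) o i = x i

lemma exists_isOdometerChart [NeZero p] (h : LevelTransitive a)
    (ha : a ∈ treeAutGroup (fun _ => p)) (o : Bd (fun _ => p)) :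
    ∃ w, IsOdometerChart a o w := by
  choose K hK using fun n x => h n o x
  have hspec : ∀ n x (k : ℤ), (K n x : ZMod (p ^ n)) = k ↔ ∀ i < n, (a ^ k) o i = x i := by
    intro n x k
    rw [← h.zpow_agree_iff ha]
    exact forall₂_congr fun i hi => by rw [hK n x i hi, eq_comm]
  refine ⟨fun x => ⟨fun n => K (n + 1) x, fun n => ?_⟩, fun x n k => hspec (n + 1) x k⟩
  rw [map_intCast]
  exact ((hspec (n + 1) x _).2 fun i hi => hK (n + 2) x i (by omega)).symm

namespace IsOdometerChart

variable (hw : IsOdometerChart a o w)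
include hw

lemma zpow_val_agree [NeZero p] (x : Bd (fun _ => p)) (n : ℕ) :
    ∀ i < n + 1, (a ^ (((w x).val n).val : ℤ)) o i = x i :=
  (hw x n _).1 (by simp)

lemma val_eq_val_iff [NeZero p] {x y : Bd (fun _ => p)} {n : ℕ} :
    (w x).val n = (w y).val n ↔ ∀ i < n + 1, x i = y i := by
  conv_lhs => rw [← ZMod.natCast_zmod_val ((w x).val n), eq_comm, ← Int.cast_natCast, hw]
  exact forall₂_congr fun i hi => by rw [hw.zpow_val_agree x n i hi]

lemma agree_iff [NeZero p] {x y : Bd (fun _ => p)} {n : ℕ} :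
    (∀ i < n, (w x).val i = (w y).val i) ↔ ∀ i < n, x i = y i := by
  refine Iff.trans ?_ forall_agree_succ_iff
  exact forall₂_congr fun i _ => hw.val_eq_val_iff

lemma injective [NeZero p] : Injective w := fun x y hxy =>
  forall_agree_iff_eq.1 fun _ => hw.agree_iff.1 fun _ _ => by rw [hxy]

lemma ultraDist_eq [NeZero p] (x y : Bd (fun _ => p)) :
    ultraDist x y = ultraDist (w x).val (w y).val :=
  ultraDist_eq_ultraDist_iff.2 fun _ => hw.agree_iff.symm

lemma val_base (n : ℕ) : (w o).val n = 0 :=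
  by exact_mod_cast (hw o n 0).2 fun _ _ => rfl

lemma val_zpow_apply [NeZero p] (ha : a ∈ treeAutGroup (fun _ => p)) (k : ℤ)
    (x : Bd (fun _ => p)) (n : ℕ) :
    (w ((a ^ k) x)).val n = (w x).val n + k := by
  have h := (hw ((a ^ k) x) n (k + ((w x).val n).val)).2 fun i hi => by
    rw [zpow_add, Equiv.Perm.mul_apply]
    exact (zpow_apply_agree_iff ha k).2 (hw.zpow_val_agree x n) i hi
  rw [h]
  push_cast
  rw [ZMod.natCast_zmod_val]
  exact add_comm _ _

lemma val_apply [NeZero p] (ha : a ∈ treeAutGroup (fun _ => p)) (x : Bd (fun _ => p)) :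
    (w (a x)).val = fun n => (w x).val n + 1 :=
  funext fun n => by simpa using hw.val_zpow_apply ha 1 x n

lemma zpow_agree_iff [NeZero p] (ha : a ∈ treeAutGroup (fun _ => p)) {x : Bd (fun _ => p)}
    {n : ℕ} {s t : ℤ} :
    (∀ i < n + 1, (a ^ s) x i = (a ^ t) x i) ↔ (s : ZMod (p ^ (n + 1))) = t := by
  rw [← hw.val_eq_val_iff, hw.val_zpow_apply ha, hw.val_zpow_apply ha, add_right_inj]

end IsOdometerChart

end Odometer

section Closure

variable {p : ℕ} {a : Equiv.Perm (Bd (fun _ => p))} {o : Bd (fun _ => p)}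
  {w : Bd (fun _ => p) → Zadic p}

/-- The action of `z ∈ ℤ_p` on the boundary, as the limit of the powers `a ^ z n`. -/
def zadicPow (a : Equiv.Perm (Bd (fun _ => p))) (z : Zadic p) (x : Bd (fun _ => p)) :
    Bd (fun _ => p) :=
  fun i => (a ^ ((z.val i).val : ℤ)) x i

abbrev ZPowersClosure {m : ℕ → ℕ} (a : Equiv.Perm (Bd m)) : Type :=
  {f : Bd m → Bd m // InClosure (Subgroup.zpowers a : Set (Equiv.Perm (Bd m))) f}

def ZPowersClosure.zpow {m : ℕ → ℕ} (a : Equiv.Perm (Bd m)) (k : ℤ) : ZPowersClosure a :=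
  ⟨⇑(a ^ k), fun _ => ⟨a ^ k, ⟨k, rfl⟩, fun _ _ _ => rfl⟩⟩

lemma InClosure.exists_zpow {m : ℕ → ℕ} {a : Equiv.Perm (Bd m)} {f : Bd m → Bd m}
    (hf : InClosure (Subgroup.zpowers a : Set (Equiv.Perm (Bd m))) f) (n : ℕ) :
    ∃ s : ℤ, ∀ x, ∀ i < n, f x i = (a ^ s) x i := by
  obtain ⟨_, ⟨s, rfl⟩, h⟩ := hf n
  exact ⟨s, h⟩

namespace IsOdometerChart

variable [NeZero p] (hw : IsOdometerChart a o w) (ha : a ∈ treeAutGroup (fun _ => p))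
include hw ha

lemma zadicPow_agree (z : Zadic p) (x : Bd (fun _ => p)) (n : ℕ) :
    ∀ i < n + 1, zadicPow a z x i = (a ^ ((z.val n).val : ℤ)) x i := fun i hi =>
  (hw.zpow_agree_iff ha).2 (by
    simp only [Int.cast_natCast]
    rw [ZMod.natCast_zmod_val, Zadic.natCast_val_of_le z (Nat.le_of_lt_succ hi)]) i i.lt_succ_self

lemma apply_zadicPow (z : Zadic p) : w (zadicPow a z o) = z := by
  refine Subtype.ext (funext fun n => ?_)
  rw [hw.val_eq_val_iff.2 (hw.zadicPow_agree ha z o n), hw.val_zpow_apply ha, hw.val_base]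
  simp

lemma surjective : Surjective w := fun z => ⟨_, hw.apply_zadicPow ha z⟩

lemma zadicPow_inClosure (z : Zadic p) :
    InClosure (Subgroup.zpowers a : Set (Equiv.Perm (Bd (fun _ => p)))) (zadicPow a z) := fun n =>
  ⟨_, ⟨_, rfl⟩, fun x i hi => hw.zadicPow_agree ha z x n i (by omega)⟩

lemma val_apply_of_inClosure {f : Bd (fun _ => p) → Bd (fun _ => p)}
    (hf : InClosure (Subgroup.zpowers a : Set (Equiv.Perm (Bd (fun _ => p)))) f)
    (x : Bd (fun _ => p)) (n : ℕ) :
    (w (f x)).val n = (w x).val n + (w (f o)).val n := by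
  obtain ⟨s, hs⟩ := hf.exists_zpow (n + 1)
  rw [hw.val_eq_val_iff.2 (hs x), hw.val_eq_val_iff.2 (hs o), hw.val_zpow_apply ha,
    hw.val_zpow_apply ha, hw.val_base, zero_add]

lemma exists_closure_isometry :
    ∃ ψ : ZPowersClosure a → Zadic p,
      Bijective ψ ∧
      (∀ f g, ∀ hfg : InClosure (Subgroup.zpowers a : Set (Equiv.Perm (Bd (fun _ => p))))
          (f.val ∘ g.val),
        (ψ ⟨f.val ∘ g.val, hfg⟩).val = fun n => (ψ f).val n + (ψ g).val n) ∧
      (∀ f g, ultraDistMap f.val g.val = ultraDist (ψ f).val (ψ g).val) := by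
  have translate := fun (f : ZPowersClosure a) => hw.val_apply_of_inClosure ha f.2
  refine ⟨fun f => w (f.1 o), ⟨fun f g hfg => ?_,
    fun z => ⟨⟨_, hw.zadicPow_inClosure ha z⟩, hw.apply_zadicPow ha z⟩⟩,
    fun f g _ => funext fun n => ?_, fun f g => ?_⟩
  · refine Subtype.ext (funext fun x => hw.injective (Subtype.ext (funext fun n => ?_)))
    rw [translate f, translate g]
    exact congrArg (fun z : Zadic p => (w x).val n + z.val n) hfg
  · exact (translate f (g.1 o) n).trans (add_comm _ _)
  · have hconst : ∀ x, ultraDist (f.1 x) (g.1 x) = ultraDist (w (f.1 o)).val (w (g.1 o)).val :=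
      fun x => (hw.ultraDist_eq _ _).trans (ultraDist_eq_ultraDist_iff.2 fun n =>
        forall₂_congr fun i _ => by rw [translate f, translate g, add_right_inj])
    exact (congrArg iSup (funext hconst)).trans ciSup_const

end IsOdometerChart

end Closure

section Converse

variable {p : ℕ} [NeZero p] {a : Equiv.Perm (Bd (fun _ => p))} {ψ : ZPowersClosure a → Zadic p}

lemma val_zpow_eq_intCast_mul
    (hadd : ∀ f g, ∀ hfg : InClosure (Subgroup.zpowers a : Set (Equiv.Perm (Bd (fun _ => p))))
        (f.val ∘ g.val),
      (ψ ⟨f.val ∘ g.val, hfg⟩).val = fun n => (ψ f).val n + (ψ g).val n)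
    (n : ℕ) (k : ℤ) :
    (ψ (ZPowersClosure.zpow a k)).val n = k * (ψ (ZPowersClosure.zpow a 1)).val n := by
  have hcomp : ∀ f g h : ZPowersClosure a, f.1 ∘ g.1 = h.1 →
      (ψ h).val n = (ψ f).val n + (ψ g).val n := by
    rintro f g ⟨_, hh⟩ rfl
    exact congrFun (hadd f g hh) n
  let φ : ℤ →+ ZMod (p ^ (n + 1)) :=
    AddMonoidHom.mk' (fun k => (ψ (ZPowersClosure.zpow a k)).val n) fun s t =>
      hcomp _ _ _ (funext fun x => by simp [ZPowersClosure.zpow, zpow_add])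
  rw [← zsmul_eq_mul]
  exact AddMonoidHom.apply_int _ φ k

lemma agree_iff_of_ultraDistMap_eq
    (hiso : ∀ f g, ultraDistMap f.val g.val = ultraDist (ψ f).val (ψ g).val)
    (f g : ZPowersClosure a) (n : ℕ) :
    (∀ x, ∀ i < n, f.1 x i = g.1 x i) ↔ ∀ i < n, (ψ f).val i = (ψ g).val i := by
  have : Nonempty (Bd (fun _ => p)) := ⟨fun _ => 0⟩
  rw [← ultraDistMap_le_iff, hiso, ultraDist_le_iff]

lemma levelOrderEqPow_of_closure_isometry (hsurj : Surjective ψ)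
    (hadd : ∀ f g, ∀ hfg : InClosure (Subgroup.zpowers a : Set (Equiv.Perm (Bd (fun _ => p))))
        (f.val ∘ g.val),
      (ψ ⟨f.val ∘ g.val, hfg⟩).val = fun n => (ψ f).val n + (ψ g).val n)
    (hiso : ∀ f g, ultraDistMap f.val g.val = ultraDist (ψ f).val (ψ g).val) :
    LevelOrderEqPow p a := by
  have hunit (n : ℕ) :
      ∃ k : ℤ, (k : ZMod (p ^ (n + 1))) * (ψ (ZPowersClosure.zpow a 1)).val n = 1 := by
    obtain ⟨f, hf⟩ := hsurj ⟨fun _ => 1, fun _ => map_one _⟩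
    obtain ⟨k, hk⟩ := f.2.exists_zpow (n + 1)
    have h := (agree_iff_of_ultraDistMap_eq hiso f (ZPowersClosure.zpow a k) (n + 1)).1 hk n
      n.lt_succ_self
    rw [hf, val_zpow_eq_intCast_mul hadd n k] at h
    exact ⟨k, h.symm⟩
  intro n t
  have hfix : (∀ x, ∀ i < n, (a ^ t) x i = x i) ↔
      ∀ x, ∀ i < n, (ZPowersClosure.zpow a t).1 x i = (ZPowersClosure.zpow a 0).1 x i := by
    simp [ZPowersClosure.zpow]
  rw [hfix, agree_iff_of_ultraDistMap_eq hiso, ← forall_intCast_zmod_pow_eq_zero_iff]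
  refine forall₂_congr fun i _ => ?_
  obtain ⟨k, hk⟩ := hunit i
  rw [val_zpow_eq_intCast_mul hadd i t, val_zpow_eq_intCast_mul hadd i 0, Int.cast_zero,
    zero_mul]
  refine ⟨fun ht => ?_, fun ht => by rw [ht, zero_mul]⟩
  linear_combination (k : ZMod (p ^ (i + 1))) * ht - (t : ZMod (p ^ (i + 1))) * hk

lemma levelTransitive_of_isometric_conj {w : Bd (fun _ => p) → Zadic p}
    (hiso : ∀ x y, ultraDist x y = ultraDist (w x).val (w y).val)
    (hconj : ∀ x, (w (a x)).val = fun n => (w x).val n + 1) : LevelTransitive a := by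
  have hpow (k : ℕ) : ∀ x n, (w ((a ^ k) x)).val n = (w x).val n + k := by
    induction k with
    | zero => simp
    | succ k ih =>
      intro x n
      rw [pow_succ a k, Equiv.Perm.mul_apply, ih, congrFun (hconj x) n]
      push_cast
      ring
  rintro (_ | n) x y
  · exact ⟨0, fun i hi => absurd hi i.not_lt_zero⟩
  refine ⟨((w y).val n - (w x).val n).val, ?_⟩
  rw [zpow_natCast, ultraDist_eq_ultraDist_iff.1 (hiso _ _) (n + 1)]
  intro i hi
  rw [← Zadic.natCast_val_of_le _ (Nat.le_of_lt_succ hi),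
    ← Zadic.natCast_val_of_le (w y) (Nat.le_of_lt_succ hi), hpow, ZMod.natCast_zmod_val,
    add_sub_cancel]

end Converse

/-- Let `p` be prime and `T` the `p`-ary rooted tree. For `a ∈ Aut(T)` the
following are equivalent: (1) `a` is minimal (every orbit is dense in the
boundary); (2) `a` acts transitively on every vertex level; (3) the order of
`a` restricted to `V n` equals `p ^ n` for every `n`; (4) the closure of
`⟨a⟩` is isometrically isomorphic to the `p`-adic integers `ℤ_p`; (5) the
system `(∂T, a)` is conjugate by an isometry to the `p`-adic odometer
`(ℤ_p, x ↦ x + 1)`. -/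
theorem settled_stmt8 (p : ℕ) (hp : p.Prime)
    (a : Equiv.Perm (Bd (fun _ => p))) (ha : a ∈ treeAutGroup (fun _ => p)) :
    List.TFAE
      [ -- (1) minimal
        (∀ x : Bd (fun _ => p), Dense (orbitZ a x)),
        -- (2) transitive on every level
        LevelTransitive a,
        -- (3) the order of the restriction to `V n` is `p ^ n`
        (∀ n : ℕ, (∀ x : Bd (fun _ => p), ∀ i < n, ((a ^ (p ^ n)) x) i = x i) ∧
          ∀ t, 0 < t → t < p ^ n → ∃ x : Bd (fun _ => p), ∃ i < n, ((a ^ t) x) i ≠ x i),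
        -- (4) the closure of `⟨a⟩` is isometrically isomorphic to `ℤ_p`
        (∃ ψ : {f : Bd (fun _ => p) → Bd (fun _ => p) //
                InClosure ((Subgroup.zpowers a : Subgroup (Equiv.Perm (Bd (fun _ => p)))) :
                  Set (Equiv.Perm (Bd (fun _ => p)))) f} → Zadic p,
          Function.Bijective ψ ∧
          (∀ f g, ∀ hfg : InClosure ((Subgroup.zpowers a : Subgroup (Equiv.Perm (Bd (fun _ => p)))) :
              Set (Equiv.Perm (Bd (fun _ => p)))) (f.val ∘ g.val),
            (ψ ⟨f.val ∘ g.val, hfg⟩).val = fun n => (ψ f).val n + (ψ g).val n) ∧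
          (∀ f g, ultraDistMap f.val g.val = ultraDist (ψ f).val (ψ g).val)),
        -- (5) `(∂T, a)` is conjugate by an isometry to the odometer `(ℤ_p, +1)`
        (∃ w : Bd (fun _ => p) → Zadic p,
          Function.Bijective w ∧
          (∀ x y : Bd (fun _ => p), ultraDist x y = ultraDist (w x).val (w y).val) ∧
          (∀ x : Bd (fun _ => p), (w (a x)).val = fun n => (w x).val n + 1)) ] := by
  have : NeZero p := ⟨hp.ne_zero⟩
  tfae_have 1 ↔ 2 :=
    ⟨fun h n x => dense_orbitZ_iff.1 (h x) n, fun h x => dense_orbitZ_iff.2 fun n => h n x⟩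
  tfae_have 2 → 3 := fun h => (h.levelOrderEqPow ha).restrict_orderOf
  tfae_have 3 → 2 := levelTransitive_of_restrict_orderOf hp ha
  tfae_have 2 → 4 := fun h =>
    (exists_isOdometerChart h ha (fun _ => 0)).choose_spec.exists_closure_isometry ha
  tfae_have 4 → 3 := fun ⟨_, hbij, hadd, hiso⟩ =>
    (levelOrderEqPow_of_closure_isometry hbij.2 hadd hiso).restrict_orderOf
  tfae_have 2 → 5 := fun h => by
    obtain ⟨w, hw⟩ := exists_isOdometerChart h ha (fun _ => 0)
    exact ⟨w, ⟨hw.injective, hw.surjective ha⟩, hw.ultraDist_eq, hw.val_apply ha⟩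
  tfae_have 5 → 2 := fun ⟨_, _, hiso, hconj⟩ => levelTransitive_of_isometric_conj hiso hconj
  tfae_finish
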